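/- Let R = ⊕_{n≥0} R_n be an N-graded ring of characteristic p, q = p^e, and define R^{(e)} as R with right R-action r * b = r b^q. For a graded R-module M, the assignment deg(r ⊗ m) = deg(r) + q·deg(m) gives a well-defined Z-grading on R^{(e)} ⊗_R M. -/

import Mathlib

/-!
Put `r ⊗ m`, for `r ∈ R_i` and `m ∈ M_j`, in degree `i + q j` and extend bi-additively to a map
`ψ : R^{(e)} ⊗_R M → ⨁ₙ R^{(e)} ⊗_R M`. It is well defined because the balancing relation
`(b^q r) ⊗ m = r ⊗ b m` is homogeneous: for `b ∈ R_k` both sides have degree `i + q (k + j)`.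
The `n`-th piece of the grading consists of the `x` with `ψ x = x` placed in degree `n`. Since `ψ`
restricts to the inclusion on each piece the pieces are independent, and they span because every
homogeneous pure tensor lies in one of them.
-/

open scoped TensorProduct

/-- `R^{(e)}`: the ring `R` viewed as a (right) `R`-module via `r * b = r b^q`, `q = p^e`,
i.e. `b • r = b^{p^e} r`. -/
def FrobeniusModule (R : Type*) [CommRing R] (p e : ℕ) [ExpChar R p] : Type _ := R

noncomputable instance (R : Type*) [CommRing R] (p e : ℕ) [ExpChar R p] :
    AddCommGroup (FrobeniusModule R p e) :=
  inferInstanceAs (AddCommGroup R)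

noncomputable instance (R : Type*) [CommRing R] (p e : ℕ) [ExpChar R p] :
    Module R (FrobeniusModule R p e) :=
  Module.compHom R (iterateFrobenius R p e)

/-- An element of `R` viewed in `FrobeniusModule R p e`. -/
def FrobeniusModule.of {R : Type*} [CommRing R] (p e : ℕ) [ExpChar R p] (r : R) :
    FrobeniusModule R p e := r

open DirectSum

namespace DirectSum

variable {ι κ σ τ R M N : Type*} [DecidableEq ι] [DecidableEq κ]
  [AddCommMonoid R] [AddCommMonoid M] [AddCommMonoid N]
  [SetLike σ R] [AddSubmonoidClass σ R] [SetLike τ M] [AddSubmonoidClass τ M]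

theorem decompose_addHom_ext₂ (𝒜 : ι → σ) [Decomposition 𝒜] (ℳ : κ → τ) [Decomposition ℳ]
    {f g : R →+ M →+ N}
    (h : ∀ i j r m, r ∈ 𝒜 i → m ∈ ℳ j → f r m = g r m) : f = g := by
  ext r m
  induction r using Decomposition.inductionOn 𝒜 generalizing m with
  | zero => simp only [map_zero, AddMonoidHom.zero_apply]
  | add r r' hr hr' => simp only [map_add, AddMonoidHom.add_apply, hr, hr']
  | homogeneous r =>
    induction m using Decomposition.inductionOn ℳ with
    | zero => simp only [map_zero]
    | add m m' hm hm' => simp only [map_add, hm, hm']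
    | homogeneous m => exact h _ _ _ _ r.2 m.2

end DirectSum

namespace AddMonoidHom

variable {ι T : Type*} [DecidableEq ι] [AddCommGroup T] (ψ : T →+ ⨁ _ : ι, T)

def gradingOf (n : ι) : AddSubgroup T where
  carrier := {x | ψ x = of _ n x}
  zero_mem' := by simp
  add_mem' {x y} hx hy := by simp_all
  neg_mem' {x} hx := by simp_all

theorem mem_gradingOf {n : ι} {x : T} : x ∈ ψ.gradingOf n ↔ ψ x = of _ n x := Iff.rfl

theorem apply_coeAddMonoidHom_gradingOf (y : ⨁ n, ψ.gradingOf n) (n : ι) :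
    ψ (DirectSum.coeAddMonoidHom ψ.gradingOf y) n = y n := by
  induction y using DirectSum.induction_on with
  | zero => simp
  | of k z =>
    rw [coeAddMonoidHom_of, (mem_gradingOf ψ).1 z.2]
    obtain rfl | hkn := eq_or_ne k n
    · simp only [of_eq_same]
    · rw [of_eq_of_ne _ _ _ hkn.symm, of_eq_of_ne _ _ _ hkn.symm, ZeroMemClass.coe_zero]
  | add y y' hy hy' =>
    rw [map_add, map_add, DirectSum.add_apply, DirectSum.add_apply, hy, hy', AddSubgroup.coe_add]

theorem isInternal_gradingOf (h : ⨆ n, ψ.gradingOf n = ⊤) : IsInternal ψ.gradingOf := by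
  refine ⟨(injective_iff_map_eq_zero _).2 fun y hy => DFinsupp.ext fun n => ?_, ?_⟩
  · have := ψ.apply_coeAddMonoidHom_gradingOf y n
    rw [hy, map_zero, DirectSum.zero_apply] at this
    exact Subtype.ext this.symm
  · rw [← AddMonoidHom.range_eq_top, eq_top_iff, ← h]
    exact iSup_le fun n x hx => ⟨of (fun n => ψ.gradingOf n) n ⟨x, hx⟩, coeAddMonoidHom_of _ _ _⟩

end AddMonoidHom

namespace FrobeniusModule

variable {R : Type*} [CommRing R] (p e : ℕ) [ExpChar R p]

def ofAddEquiv : R ≃+ FrobeniusModule R p e where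
  toFun := of p e
  invFun r := r
  left_inv _ := rfl
  right_inv _ := rfl
  map_add' _ _ := rfl

@[simp]
theorem ofAddEquiv_apply (r : R) : ofAddEquiv p e r = of p e r := rfl

@[simp]
theorem ofAddEquiv_symm_of (r : R) : (ofAddEquiv p e).symm (of p e r) = r := rfl

theorem smul_of (b r : R) : b • of p e r = of p e (b ^ p ^ e * r) := by
  change iterateFrobenius R p e b * r = b ^ p ^ e * r
  rw [iterateFrobenius_def]

variable {M : Type*} [AddCommGroup M] [Module R M]

theorem addSubgroup_eq_top_of_tmul_mem {ι κ : Type*} [DecidableEq ι] [DecidableEq κ]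
    (𝒜 : ι → AddSubgroup R) [Decomposition 𝒜] (ℳ : κ → AddSubgroup M) [Decomposition ℳ]
    {S : AddSubgroup (FrobeniusModule R p e ⊗[R] M)}
    (h : ∀ i j r m, r ∈ 𝒜 i → m ∈ ℳ j → of p e r ⊗ₜ[R] m ∈ S) : S = ⊤ := by
  classical
  refine (AddSubgroup.eq_top_iff' S).2 fun x => ?_
  induction x using TensorProduct.induction_on with
  | zero => exact zero_mem S
  | add x y hx hy => exact add_mem hx hy
  | tmul r m =>
    rw [← (ofAddEquiv p e).apply_symm_apply r, ← sum_support_decompose 𝒜 ((ofAddEquiv p e).symm r),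
      ← sum_support_decompose ℳ m, map_sum, TensorProduct.sum_tmul]
    refine sum_mem fun i _ => ?_
    rw [TensorProduct.tmul_sum]
    exact sum_mem fun j _ => h _ _ _ _ (decompose 𝒜 _ i).2 (decompose ℳ _ j).2

variable (𝒜 : ℕ → AddSubgroup R) [Decomposition 𝒜] (ℳ : ℤ → AddSubgroup M) [Decomposition ℳ]

noncomputable def tmulHomogeneous (i : ℕ) (j : ℤ) :
    𝒜 i →+ ℳ j →+ ⨁ _ : ℤ, FrobeniusModule R p e ⊗[R] M :=
  AddMonoidHom.mk'
    (fun r => AddMonoidHom.mk'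
      (fun m => DirectSum.of _ (i + (p : ℤ) ^ e * j) (of p e (r : R) ⊗ₜ[R] (m : M)))
      fun m m' => by simp only [AddSubgroup.coe_add, TensorProduct.tmul_add, map_add])
    fun r r' => by
      ext m
      simp only [AddMonoidHom.mk'_apply, AddMonoidHom.add_apply, AddSubgroup.coe_add,
        ← ofAddEquiv_apply, map_add, TensorProduct.add_tmul]

noncomputable def tmulDecompose :
    FrobeniusModule R p e →+ M →+ ⨁ _ : ℤ, FrobeniusModule R p e ⊗[R] M :=
  ((toAddMonoid fun i => (toAddMonoid fun j => (tmulHomogeneous p e 𝒜 ℳ i j).flip).flip).comp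
    ((ofAddEquiv p e).symm.trans (decomposeAddEquiv 𝒜)).toAddMonoidHom).compl₂
    (decomposeAddEquiv ℳ).toAddMonoidHom

variable {𝒜 ℳ} in
theorem tmulDecompose_of_mem {i : ℕ} {j : ℤ} {r : R} {m : M} (hr : r ∈ 𝒜 i) (hm : m ∈ ℳ j) :
    tmulDecompose p e 𝒜 ℳ (of p e r) m =
      DirectSum.of _ (i + (p : ℤ) ^ e * j) (of p e r ⊗ₜ[R] m) := by
  simp [tmulDecompose, decompose_of_mem 𝒜 hr, decompose_of_mem ℳ hm, tmulHomogeneous]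

variable {𝒜 ℳ} [SetLike.GradedMonoid 𝒜]
  (hmod : ∀ (i : ℕ) (j : ℤ) (r : R) (m : M), r ∈ 𝒜 i → m ∈ ℳ j → r • m ∈ ℳ (i + j))
include hmod

theorem tmulDecompose_pow_mul {k : ℕ} {b : R} (hb : b ∈ 𝒜 k) (r : R) (m : M) :
    tmulDecompose p e 𝒜 ℳ (of p e (b ^ p ^ e * r)) m =
      tmulDecompose p e 𝒜 ℳ (of p e r) (b • m) := by
  suffices ((tmulDecompose p e 𝒜 ℳ).comp (ofAddEquiv p e).toAddMonoidHom).comp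
      (AddMonoidHom.mulLeft (b ^ p ^ e)) =
      ((tmulDecompose p e 𝒜 ℳ).comp (ofAddEquiv p e).toAddMonoidHom).compl₂
        (DistribSMul.toAddMonoidHom M b) from
    DFunLike.congr_fun (DFunLike.congr_fun this r) m
  refine decompose_addHom_ext₂ 𝒜 ℳ fun i j r m hr hm => ?_
  have hbr : b ^ p ^ e * r ∈ 𝒜 (p ^ e * k + i) :=
    SetLike.mul_mem_graded (SetLike.pow_mem_graded _ hb) hr
  have hdeg : ((p ^ e * k + i : ℕ) : ℤ) + p ^ e * j = i + p ^ e * (k + j) := by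
    push_cast
    ring
  simp only [AddMonoidHom.coe_comp, Function.comp_apply, AddMonoidHom.coe_mulLeft,
    AddMonoidHom.compl₂_apply, DistribSMul.toAddMonoidHom_apply, AddEquiv.coe_toAddMonoidHom,
    ofAddEquiv_apply, tmulDecompose_of_mem p e hbr hm,
    tmulDecompose_of_mem p e hr (hmod k j b m hb hm)]
  rw [hdeg, ← smul_of, TensorProduct.smul_tmul]

theorem tmulDecompose_smul (b : R) (x : FrobeniusModule R p e) (m : M) :
    tmulDecompose p e 𝒜 ℳ (b • x) m = tmulDecompose p e 𝒜 ℳ x (b • m) := by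
  induction b using Decomposition.inductionOn 𝒜 generalizing m with
  | zero => simp only [zero_smul, map_zero, AddMonoidHom.zero_apply]
  | add b b' hb hb' => simp only [add_smul, map_add, AddMonoidHom.add_apply, hb, hb']
  | homogeneous b =>
    rw [← (ofAddEquiv p e).apply_symm_apply x, ofAddEquiv_apply, smul_of]
    exact tmulDecompose_pow_mul p e hmod b.2 _ m

noncomputable def tensorDecompose :
    FrobeniusModule R p e ⊗[R] M →+ ⨁ _ : ℤ, FrobeniusModule R p e ⊗[R] M :=
  TensorProduct.liftAddHom (tmulDecompose p e 𝒜 ℳ) (tmulDecompose_smul p e hmod)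

theorem tensorDecompose_tmul_of_mem {i : ℕ} {j : ℤ} {r : R} {m : M} (hr : r ∈ 𝒜 i)
    (hm : m ∈ ℳ j) :
    tensorDecompose p e hmod (of p e r ⊗ₜ[R] m) =
      DirectSum.of _ (i + (p : ℤ) ^ e * j) (of p e r ⊗ₜ[R] m) :=
  tmulDecompose_of_mem p e hr hm

end FrobeniusModule

/-- Let `R = ⊕_{n ≥ 0} Rₙ` be an `ℕ`-graded ring of prime characteristic `p`, `q = p^e`,
and `M` a `ℤ`-graded `R`-module.  Then the assignment `deg (r ⊗ m) = deg r + q · deg m`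
yields a well-defined `ℤ`-grading on `R^{(e)} ⊗_R M`: there is an internal direct sum
decomposition `G : ℤ → AddSubgroup (R^{(e)} ⊗_R M)` with `r ⊗ m ∈ G (i + q·j)` for every
homogeneous `r` of degree `i` and `m` of degree `j`. -/
theorem frobeniusModule_tensor_graded
    (R : Type*) [CommRing R] (p : ℕ) [Fact p.Prime] [CharP R p] (e : ℕ)
    (𝒜 : ℕ → AddSubgroup R) [GradedRing 𝒜]
    (M : Type*) [AddCommGroup M] [Module R M]
    (ℳ : ℤ → AddSubgroup M) [DirectSum.Decomposition ℳ]
    (hmod : ∀ (i : ℕ) (j : ℤ) (r : R) (m : M), r ∈ 𝒜 i → m ∈ ℳ j → r • m ∈ ℳ (i + j)) :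
    ∃ G : ℤ → AddSubgroup (FrobeniusModule R p e ⊗[R] M),
      DirectSum.IsInternal G ∧
      ∀ (i : ℕ) (j : ℤ) (r : R) (m : M), r ∈ 𝒜 i → m ∈ ℳ j →
        (FrobeniusModule.of p e r ⊗ₜ[R] m) ∈ G (i + (p : ℤ) ^ e * j) := by
  set ψ := FrobeniusModule.tensorDecompose p e hmod
  have homogeneous_mem : ∀ (i : ℕ) (j : ℤ) (r : R) (m : M), r ∈ 𝒜 i → m ∈ ℳ j →
      FrobeniusModule.of p e r ⊗ₜ[R] m ∈ ψ.gradingOf (i + (p : ℤ) ^ e * j) :=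
    fun _ _ _ _ hr hm => FrobeniusModule.tensorDecompose_tmul_of_mem p e hmod hr hm
  refine ⟨ψ.gradingOf, ψ.isInternal_gradingOf ?_, homogeneous_mem⟩
  exact FrobeniusModule.addSubgroup_eq_top_of_tmul_mem p e 𝒜 ℳ fun i j r m hr hm =>
    AddSubgroup.mem_iSup_of_mem _ (homogeneous_mem i j r m hr hm)
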